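/- For all positive integers n and k, and any x, (-1)^n Ch_n^{(k)}(x)/n! = Σ_{m=1}^{n} binomial(n-1, n-m) Ĉh_m^{(k)}(-x)/m!. -/

import Mathlib

open PowerSeries Finset

/-- Higher-order Changhee numbers of the first kind. -/
noncomputable def Ch (k n : ℕ) : ℚ := (-1/2)^n * n.factorial * ((n+k-1).choose n)

/-- Signed Stirling numbers of the first kind, via coefficients of the falling factorial. -/
noncomputable def stirling1 (n l : ℕ) : ℚ :=
  (∏ i ∈ Finset.range n, (Polynomial.X - (i : Polynomial ℚ))).coeff l

/-- Stirling numbers of the second kind, via (e^t-1)^n = n! Σ S₂(m,n) t^m/m!. -/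
noncomputable def stirling2 (m n : ℕ) : ℚ :=
  (m.factorial : ℚ) / n.factorial * PowerSeries.coeff m ((PowerSeries.exp ℚ - 1)^n)

/-- Higher-order Euler numbers, from (2/(e^t+1))^k. -/
noncomputable def EulerN (k l : ℕ) : ℚ :=
  l.factorial * PowerSeries.coeff l ((2 * (PowerSeries.exp ℚ + 1)⁻¹)^k)

/-- Higher-order Euler polynomials, from (2/(e^t+1))^k e^{xt}. -/
noncomputable def EulerP (k : ℕ) (x : ℚ) (l : ℕ) : ℚ :=
  l.factorial * PowerSeries.coeff l
    ((2 * (PowerSeries.exp ℚ + 1)⁻¹)^k * PowerSeries.rescale x (PowerSeries.exp ℚ))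

/-- Generalized binomial coefficient. -/
noncomputable def gbinom (x : ℚ) (m : ℕ) : ℚ := (∏ i ∈ Finset.range m, (x - i)) / m.factorial

/-- Binomial series (1+t)^x. -/
noncomputable def onePlusXPow (x : ℚ) : PowerSeries ℚ := PowerSeries.mk fun m => gbinom x m

/-- Higher-order Changhee polynomials of the first kind, from (2/(2+t))^k (1+t)^x. -/
noncomputable def ChP (k : ℕ) (x : ℚ) (n : ℕ) : ℚ :=
  n.factorial * PowerSeries.coeff n
    ((2 * (2 + PowerSeries.X : PowerSeries ℚ)⁻¹)^k * onePlusXPow x)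

/-- Higher-order Changhee numbers of the second kind, from (2/(2+t))^k (1+t)^k. -/
noncomputable def ChhN (k n : ℕ) : ℚ :=
  n.factorial * PowerSeries.coeff n
    ((2 * (2 + PowerSeries.X : PowerSeries ℚ)⁻¹)^k * (1 + PowerSeries.X)^k)

/-- Higher-order Changhee polynomials of the second kind, from (2/(2+t))^k (1+t)^{x+k}. -/
noncomputable def ChP2 (k : ℕ) (x : ℚ) (n : ℕ) : ℚ :=
  n.factorial * PowerSeries.coeff n
    ((2 * (2 + PowerSeries.X : PowerSeries ℚ)⁻¹)^k * onePlusXPow (x + k))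

/-!
Put `P(t) = (2/(2+t))^k`, `w = -t/(1+t)` and `y = n - 1 - x`. The reflection
`(-1)^m C(x, m) = C(m - 1 - x, m)` turns the left side into `[t^n] P(w) (1+t)^y`, since
`[t^n] w^j (1+t)^y = (-1)^j C(y - j, n - j)`. As `2 + w = (2+t)/(1+t)`, we get
`P(w) = P(t) (1+t)^k`, while the right side is `[t^n] (1+t)^(n-1) P(t) (1+t)^(k-x)`; both are
`[t^n] P(t) (1+t)^(n-1+k-x)`.
-/

theorem gbinom_eq_choose (x : ℚ) (m : ℕ) : gbinom x m = Ring.choose x m := by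
  rw [Ring.choose_eq_smul, ← Polynomial.aeval_eq_smeval, Polynomial.aeval_def,
    Polynomial.eval₂_eq_eval_map, descPochhammer_map, descPochhammer_eval_eq_prod_range, gbinom,
    smul_eq_mul, div_eq_inv_mul]

theorem onePlusXPow_eq_binomialSeries (x : ℚ) :
    onePlusXPow x = PowerSeries.binomialSeries ℚ x := by
  ext m
  simp [onePlusXPow, gbinom_eq_choose]

theorem Ring.choose_natCast_sub_one_sub {R : Type*} [CommRing R] [BinomialRing R] (r : R)
    (m : ℕ) : Ring.choose (m - 1 - r) m = (-1) ^ m * Ring.choose r m := by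
  have h := Ring.choose_neg (r - m + 1) m
  rw [show r - m + 1 + m - 1 = r by ring, show -(r - m + 1) = m - 1 - r by ring] at h
  rw [h, Units.smul_def, Int.coe_negOnePow_natCast]
  simp

theorem PowerSeries.coeff_subst_mul {R : Type*} [CommRing R] {w : R⟦X⟧}
    (hw : constantCoeff w = 0) (f g : R⟦X⟧) (n : ℕ) :
    coeff n (f.subst w * g) = ∑ j ∈ range (n + 1), coeff j f * coeff n (w ^ j * g) := by
  have hs : HasSubst w := HasSubst.of_constantCoeff_zero' hw
  obtain ⟨h, hh⟩ : X ^ (n + 1) ∣ f - (trunc (n + 1) f : R⟦X⟧) := by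
    rw [X_pow_dvd_iff]
    intro m hm
    simp [coeff_trunc, hm]
  obtain ⟨u, hu⟩ : X ^ (n + 1) ∣ w ^ (n + 1) := pow_dvd_pow_of_dvd (X_dvd_iff.mpr hw) _
  conv_lhs => rw [← sub_add_cancel f (trunc (n + 1) f : R⟦X⟧), hh]
  rw [subst_add hs, subst_mul hs, subst_pow hs, subst_X hs, subst_coe hs,
    Polynomial.aeval_eq_sum_range' (natDegree_trunc_lt f n), hu, add_mul, map_add, mul_assoc,
    mul_assoc, coeff_X_pow_mul', if_neg (by omega), zero_add, sum_mul, map_sum]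
  refine sum_congr rfl fun j hj => ?_
  rw [smul_mul_assoc, coeff_smul, coeff_trunc, if_pos (mem_range.mp hj), smul_eq_mul]

theorem coeff_neg_X_mul_inv_pow_mul_binomialSeries {K : Type*} [Field K] [BinomialRing K]
    (y : K) {j n : ℕ} (hj : j ≤ n) :
    coeff n ((-X * (1 + X)⁻¹) ^ j * PowerSeries.binomialSeries K y) =
      (-1) ^ j * Ring.choose (y - j) (n - j) := by
  have hinv : (1 + X : K⟦X⟧)⁻¹ ^ j * (1 + X) ^ j = 1 := by
    rw [← mul_pow, PowerSeries.inv_mul_cancel _ (by simp), one_pow]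
  have h : (-X * (1 + X)⁻¹) ^ j * PowerSeries.binomialSeries K y
      = C ((-1) ^ j) * (X ^ j * PowerSeries.binomialSeries K (y - j)) := by
    rw [← sub_add_cancel y (j : K), binomialSeries_add, binomialSeries_nat, add_sub_cancel_right,
      map_pow, map_neg, map_one]
    linear_combination ((-1) ^ j * X ^ j * PowerSeries.binomialSeries K (y - j)) * hinv
  rw [h, coeff_C_mul, coeff_X_pow_mul', if_pos hj, binomialSeries_coeff, smul_eq_mul, mul_one]

theorem subst_two_mul_inv_two_add_X_pow (k : ℕ) :
    ((2 * (2 + X : ℚ⟦X⟧)⁻¹) ^ k).subst (-X * (1 + X : ℚ⟦X⟧)⁻¹) =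
      (2 * (2 + X)⁻¹) ^ k * (1 + X) ^ k := by
  set P : ℚ⟦X⟧ := (2 * (2 + X)⁻¹) ^ k with hP_def
  set w : ℚ⟦X⟧ := -X * (1 + X)⁻¹
  have hw : HasSubst w := HasSubst.of_constantCoeff_zero' (by simp [w])
  have h2 : constantCoeff (2 + X : ℚ⟦X⟧) ≠ 0 := by simp [map_ofNat]
  have h2X : (2 + X : ℚ⟦X⟧) ≠ 0 := fun h => h2 (by rw [h, map_zero])
  have hP : P * (2 + X) ^ k = 2 ^ k := by
    rw [hP_def, ← mul_pow, mul_assoc, PowerSeries.inv_mul_cancel _ h2, mul_one]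
  have hPw : P.subst w * (2 + w) ^ k = 2 ^ k := by
    simpa only [map_mul, map_pow, map_add, map_ofNat, substAlgHom_X, coe_substAlgHom] using
      congrArg (substAlgHom hw) hP
  have hw_mul : (2 + w) * (1 + X) = 2 + X := by
    linear_combination (-X) * PowerSeries.inv_mul_cancel (1 + X : ℚ⟦X⟧) (by simp)
  apply mul_right_cancel₀ (pow_ne_zero k h2X)
  calc P.subst w * (2 + X) ^ k = P.subst w * (2 + w) ^ k * (1 + X) ^ k := by
        rw [← hw_mul, mul_pow, mul_assoc]
    _ = P * (1 + X) ^ k * (2 + X) ^ k := by rw [hPw, ← hP]; ring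

theorem coeff_one_add_X_pow_pred_mul {R : Type*} [CommRing R] (f : R⟦X⟧) {n : ℕ} (hn : 0 < n) :
    coeff n ((1 + X) ^ (n - 1) * f) = ∑ m ∈ Icc 1 n, ((n - 1).choose (n - m) : R) * coeff m f := by
  have hpoly : ((1 + X) ^ (n - 1) : R⟦X⟧) = ((1 + Polynomial.X) ^ (n - 1) : Polynomial R) := by
    simp
  rw [mul_comm, coeff_mul, Finset.Nat.sum_antidiagonal_eq_sum_range_succ_mk, sum_range_succ',
    hpoly]
  simp only [Polynomial.coeff_coe, Polynomial.coeff_one_add_X_pow]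
  rw [Nat.sub_zero, Nat.choose_eq_zero_of_lt (by omega), Nat.cast_zero, mul_zero, add_zero,
    range_eq_Ico, sum_Ico_add' (fun m => coeff m f * ((n - 1).choose (n - m) : R)), zero_add,
    Ico_add_one_right_eq_Icc]
  exact sum_congr rfl fun m _ => mul_comm _ _

theorem changhee_poly_inversion_general (n k : ℕ) (hn : 0 < n) (x : ℚ) :
    (-1)^n * ChP k x n / n.factorial =
      ∑ m ∈ Finset.Icc 1 n, ((n-1).choose (n-m) : ℚ) * ChP2 k (-x) m / m.factorial := by
  set P : ℚ⟦X⟧ := (2 * (2 + X)⁻¹) ^ k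
  have lhs : (-1) ^ n * ChP k x n / n.factorial
      = coeff n (P.subst (-X * (1 + X)⁻¹) * PowerSeries.binomialSeries ℚ (n - 1 - x)) := by
    rw [coeff_subst_mul (by simp), ChP, onePlusXPow_eq_binomialSeries, coeff_mul,
      Finset.Nat.sum_antidiagonal_eq_sum_range_succ_mk, mul_div_assoc,
      mul_div_cancel_left₀ _ (Nat.cast_ne_zero.mpr n.factorial_ne_zero), mul_sum]
    refine sum_congr rfl fun j hj => ?_
    have hjn : j ≤ n := Nat.lt_succ_iff.mp (mem_range.mp hj)
    rw [coeff_neg_X_mul_inv_pow_mul_binomialSeries _ hjn, binomialSeries_coeff, smul_eq_mul,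
      mul_one, show (n : ℚ) - 1 - x - j = ((n - j : ℕ) : ℚ) - 1 - x by push_cast [hjn]; ring,
      Ring.choose_natCast_sub_one_sub, ← mul_assoc ((-1 : ℚ) ^ j), ← pow_add,
      Nat.add_sub_cancel' hjn]
    ring
  have rhs : ∑ m ∈ Icc 1 n, ((n - 1).choose (n - m) : ℚ) * ChP2 k (-x) m / m.factorial
      = coeff n ((1 + X) ^ (n - 1) * (P * PowerSeries.binomialSeries ℚ (-x + k))) := by
    rw [coeff_one_add_X_pow_pred_mul _ hn]
    refine sum_congr rfl fun m _ => ?_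
    rw [ChP2, onePlusXPow_eq_binomialSeries, mul_div_assoc,
      mul_div_cancel_left₀ _ (Nat.cast_ne_zero.mpr m.factorial_ne_zero)]
  rw [lhs, rhs, subst_two_mul_inv_two_add_X_pow, ← binomialSeries_nat (R := ℚ) k,
    ← binomialSeries_nat (R := ℚ) (n - 1), mul_assoc, ← binomialSeries_add, mul_left_comm,
    ← binomialSeries_add]
  congr 3
  push_cast [Nat.cast_sub hn]
  ring

theorem changhee_poly_inversion (n k : ℕ) (hn : 0 < n) (hk : 0 < k) (x : ℚ) :
    (-1)^n * ChP k x n / n.factorial =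
      ∑ m ∈ Finset.Icc 1 n, ((n-1).choose (n-m) : ℚ) * ChP2 k (-x) m / m.factorial :=
  changhee_poly_inversion_general n k hn x
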